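/- arXiv:1710.01896 — 6 statements merged into one kernel-verified Lean document; each statement's English description precedes it below -/
import Mathlib

section
/- Let 0 ≤ i, j ≤ n−1. If S_i has type A, S_j has type B, and T[i] = T[j], then S_i is lexicographically smaller than S_j. -/
/-- The suffix `S_i = T[i..n)` of the text `T` of length `n`, as a list. -/
def suff {α : Type*} (T : ℕ → α) (n i : ℕ) : List α :=
  (List.range (n - i)).map (fun t => T (i + t))

/-- `S_i` has type B: there is a `k ≥ i` with `T[k] < T[k+1]` and
`T[m] = T[m+1]` for all `i ≤ m < k`. -/
def TypeB {α : Type*} [LinearOrder α] (T : ℕ → α) (n i : ℕ) : Prop :=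
  ∃ k, i ≤ k ∧ k + 1 < n ∧ T k < T (k + 1) ∧ ∀ m, i ≤ m → m < k → T m = T (m + 1)

/-- `S_i` has type A: either there is a `k ≥ i` with `T[k] > T[k+1]` and
`T[m] = T[m+1]` for all `i ≤ m < k`, or all characters from position `i`
to the end are equal (the type propagates from `S_{n-1}`). -/
def TypeA {α : Type*} [LinearOrder α] (T : ℕ → α) (n i : ℕ) : Prop :=
  (∃ k, i ≤ k ∧ k + 1 < n ∧ T (k + 1) < T k ∧ ∀ m, i ≤ m → m < k → T m = T (m + 1))
  ∨ (∀ m, i ≤ m → m + 1 < n → T m = T (m + 1))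

/-- `S_i` is a B*-suffix: `S_i` has type B and `S_{i+1}` has type A. -/
def TypeBStar {α : Type*} [LinearOrder α] (T : ℕ → α) (n i : ℕ) : Prop :=
  TypeB T n i ∧ TypeA T n (i + 1)

/-- `lcp T n i j` is the largest `s ≥ 0` with `i + s ≤ n`, `j + s ≤ n` and
`T[i+t] = T[j+t]` for all `t < s`. -/
noncomputable def lcp {α : Type*} (T : ℕ → α) (n i j : ℕ) : ℕ :=
  sSup {s | i + s ≤ n ∧ j + s ≤ n ∧ ∀ t, t < s → T (i + t) = T (j + t)}

lemma suff_cons' {α : Type*} (T : ℕ → α) (n i : ℕ) (h : i < n) :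
    suff T n i = T i :: suff T n (i+1) := by
  unfold suff
  have h1 : n - i = (n - (i+1)) + 1 := by omega
  rw [h1, List.range_succ_eq_map, List.map_cons, List.map_map]
  congr 1
  apply List.map_congr_left
  intro a _
  show T (i + (a + 1)) = T (i + 1 + a)
  congr 1
  omega

lemma suff_nil' {α : Type*} (T : ℕ → α) (n i : ℕ) (h : n ≤ i) :
    suff T n i = [] := by
  unfold suff
  simp [Nat.sub_eq_zero_of_le h]

lemma lex_aux {α : Type*} [LinearOrder α] (T : ℕ → α) (n : ℕ) :
    ∀ m i j, i + m < n → j + m < n → (∀ t, t < m → T (i+t) = T (j+t)) →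
    T (i+m) < T (j+m) →
    List.Lex (· < ·) (suff T n i) (suff T n j) := by
  intro m
  induction m with
  | zero =>
    intro i j hin hjn _ hlt
    rw [suff_cons' T n i (by omega), suff_cons' T n j (by omega)]
    exact List.Lex.rel (by simpa using hlt)
  | succ m ih =>
    intro i j hin hjn heq hlt
    rw [suff_cons' T n i (by omega), suff_cons' T n j (by omega)]
    have h0 : T i = T j := by simpa using heq 0 (by omega)
    rw [h0]
    refine List.Lex.cons (ih (i+1) (j+1) (by omega) (by omega) ?_ ?_)
    · intro t ht
      have := heq (t+1) (by omega)
      rwa [show i + (t+1) = i + 1 + t by omega, show j + (t+1) = j + 1 + t by omega] at this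
    · rwa [show i + 1 + m = i + (m+1) by omega, show j + 1 + m = j + (m+1) by omega]

lemma lex_aux2 {α : Type*} [LinearOrder α] (T : ℕ → α) (n : ℕ) :
    ∀ m i j, i + m = n → j + m < n → (∀ t, t < m → T (i+t) = T (j+t)) →
    List.Lex (· < ·) (suff T n i) (suff T n j) := by
  intro m
  induction m with
  | zero =>
    intro i j hin hjn _
    rw [suff_nil' T n i (by omega), suff_cons' T n j (by omega)]
    exact List.Lex.nil
  | succ m ih =>
    intro i j hin hjn heq
    rw [suff_cons' T n i (by omega), suff_cons' T n j (by omega)]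
    have h0 : T i = T j := by simpa using heq 0 (by omega)
    rw [h0]
    refine List.Lex.cons (ih (i+1) (j+1) (by omega) (by omega) ?_)
    intro t ht
    have := heq (t+1) (by omega)
    rwa [show i + (t+1) = i + 1 + t by omega, show j + (t+1) = j + 1 + t by omega] at this

lemma const_chain {α : Type*} (T : ℕ → α) (i k : ℕ)
    (h : ∀ m, i ≤ m → m < k → T m = T (m+1)) :
    ∀ t, i + t ≤ k → T (i + t) = T i := by
  intro t
  induction t with
  | zero => simp
  | succ t ih =>
    intro ht
    have h1 : T (i + t) = T (i + t + 1) := h (i + t) (by omega) (by omega)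
    rw [show i + (t+1) = i + t + 1 by omega, ← h1]
    exact ih (by omega)

/-- If `S_i` has type A, `S_j` has type B and `T[i] = T[j]`, then
`S_i` is lexicographically smaller than `S_j`. -/
theorem stmt_0 {α : Type*} [LinearOrder α] (T : ℕ → α) (n : ℕ) (hn : 1 ≤ n)
    (i j : ℕ) (hi : i ≤ n - 1) (hj : j ≤ n - 1)
    (hA : TypeA T n i) (hB : TypeB T n j) (hT : T i = T j) :
    List.Lex (· < ·) (suff T n i) (suff T n j) := by
  obtain ⟨k, hjk, hkn, hklt, hconstB⟩ := hB
  have hBc : ∀ t, j + t ≤ k → T (j + t) = T j := const_chain T j k hconstB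
  have hkj : T k = T j := by
    have := hBc (k - j) (by omega)
    rwa [show j + (k - j) = k by omega] at this
  cases hA with
  | inl h =>
    obtain ⟨k', hik', hk'n, hdec, hconstA⟩ := h
    have hAc : ∀ t, i + t ≤ k' → T (i + t) = T i := const_chain T i k' hconstA
    set a := k' - i with ha
    set b := k - j with hb
    set m := min (a+1) (b+1) with hm
    apply lex_aux T n m i j (by omega) (by omega)
    · intro t ht
      rw [hAc t (by omega), hBc t (by omega), hT]
    · by_cases hab : a ≤ b
      · have e : i + m = k' + 1 := by omega
        have h1 : T k' = T i := by
          have := hAc a (by omega)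
          rwa [show i + a = k' by omega] at this
        have hL : T (i + m) < T i := by rw [e, ← h1]; exact hdec
        have hR : T j ≤ T (j + m) := by
          by_cases hmb : m ≤ b
          · rw [hBc m (by omega)]
          · rw [show j + m = k + 1 by omega, ← hkj]
            exact le_of_lt hklt
        calc T (i + m) < T i := hL
          _ = T j := hT
          _ ≤ T (j + m) := hR
      · have e : j + m = k + 1 := by omega
        have h1 : T (i + m) = T i := hAc m (by omega)
        rw [h1, hT, ← hkj, e]
        exact hklt
  | inr hall =>
    have hAc : ∀ t, i + t < n → T (i + t) = T i := by
      intro t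
      induction t with
      | zero => simp
      | succ t ih =>
        intro ht
        have h1 : T (i + t) = T (i + t + 1) := hall (i + t) (by omega) (by omega)
        rw [show i + (t+1) = i + t + 1 by omega, ← h1]
        exact ih (by omega)
    set b := k - j with hb
    by_cases hc : n - i ≤ b + 1
    · apply lex_aux2 T n (n - i) i j (by omega) (by omega)
      intro t ht
      rw [hAc t (by omega), hBc t (by omega), hT]
    · apply lex_aux T n (b + 1) i j (by omega) (by omega)
      · intro t ht
        rw [hAc t (by omega), hBc t (by omega), hT]
      · have h1 : T (i + (b + 1)) = T i := hAc _ (by omega)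
        rw [h1, hT, ← hkj, show j + (b + 1) = k + 1 by omega]
        exact hklt
end

section
/- For every position i with 0 ≤ i < n−1: S_i has type A if and only if S_{i+1} is lexicographically smaller than S_i, and S_i has type B if and only if S_i is lexicographically smaller than S_{i+1}. -/
/-!
Both sides of each equivalence are decided at the first position `k ≥ i` with `T[k] ≠ T[k+1]`:
while `T[i] = T[i+1]`, the type of `S_i` is that of `S_{i+1}`, and stripping the common first
character reduces `S_i` vs `S_{i+1}` to `S_{i+1}` vs `S_{i+2}`. At `k` the comparison of
`T[k]` with `T[k+1]` settles both; if no such `k` exists, `S_{i+1}` is a proper prefix of `S_i`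
and `S_i` has type A. Since the two types are complementary and `S_i ≠ S_{i+1}` (their lengths
differ), the statement for type A follows from the one for type B.
-/

section

variable {α : Type*} {T : ℕ → α} {n i : ℕ}

lemma length_suff (T : ℕ → α) (n i : ℕ) : (suff T n i).length = n - i := by
  simp [suff]

lemma suff_eq_nil (h : n ≤ i) : suff T n i = [] := by
  simp [suff, Nat.sub_eq_zero_of_le h]

lemma suff_eq_cons (h : i < n) : suff T n i = T i :: suff T n (i + 1) := by
  have hlen : n - i = n - (i + 1) + 1 := by omega
  simp only [suff, hlen, List.range_succ_eq_map, List.map_cons, List.map_map, Nat.add_zero,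
    List.cons.injEq, true_and]
  exact List.map_congr_left fun t _ => by simp [Nat.add_right_comm, Nat.add_assoc]

variable [LinearOrder α]

lemma lex_iff_not_lex_swap {l₁ l₂ : List α} (h : l₁ ≠ l₂) :
    List.Lex (· < ·) l₁ l₂ ↔ ¬List.Lex (· < ·) l₂ l₁ :=
  ⟨fun h₁₂ h₂₁ => asymm h₁₂ h₂₁,
    fun h₂₁ => (trichotomous_of _ l₁ l₂).resolve_right (not_or_intro h h₂₁)⟩

lemma typeA_iff_not_typeB : TypeA T n i ↔ ¬TypeB T n i := by
  constructor
  · rintro (⟨k, hik, -, hgt, hrun⟩ | hall) ⟨k', hik', hk'n, hlt, hrun'⟩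
    · rcases lt_trichotomy k k' with hkk' | rfl | hk'k
      · exact hgt.ne (hrun' k hik hkk').symm
      · exact lt_asymm hgt hlt
      · exact hlt.ne (hrun k' hik' hk'k)
    · exact hlt.ne (hall k' hik' hk'n)
  · intro hB
    by_cases hall : ∀ m, i ≤ m → m + 1 < n → T m = T (m + 1)
    · exact Or.inr hall
    push Not at hall
    classical
    let k := Nat.find hall
    obtain ⟨hik, hkn, hne⟩ : i ≤ k ∧ k + 1 < n ∧ T k ≠ T (k + 1) := Nat.find_spec hall
    have hrun : ∀ m, i ≤ m → m < k → T m = T (m + 1) := fun m him hmk => by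
      by_contra hm
      exact Nat.find_min hall hmk ⟨him, by omega, hm⟩
    rcases hne.lt_or_gt with hlt | hgt
    · exact (hB ⟨k, hik, hkn, hlt, hrun⟩).elim
    · exact Or.inl ⟨k, hik, hkn, hgt, hrun⟩

lemma typeB_iff_typeB_succ_of_eq (h : T i = T (i + 1)) : TypeB T n i ↔ TypeB T n (i + 1) := by
  constructor
  · rintro ⟨k, hik, hkn, hlt, hrun⟩
    rcases hik.eq_or_lt with rfl | hik
    · exact (hlt.ne h).elim
    · exact ⟨k, hik, hkn, hlt, fun m him hmk => hrun m (by omega) hmk⟩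
  · rintro ⟨k, hik, hkn, hlt, hrun⟩
    refine ⟨k, by omega, hkn, hlt, fun m him hmk => ?_⟩
    rcases him.eq_or_lt with rfl | him
    · exact h
    · exact hrun m him hmk

lemma lex_suff_iff_lex_suff_succ_of_eq (hi : i + 1 < n) (h : T i = T (i + 1)) :
    List.Lex (· < ·) (suff T n i) (suff T n (i + 1)) ↔
      List.Lex (· < ·) (suff T n (i + 1)) (suff T n (i + 2)) := by
  rw [suff_eq_cons (T := T) (by omega : i < n), suff_eq_cons (T := T) hi, h]
  exact List.lex_cons_iff

theorem typeB_iff_lex_suff (hi : i + 1 < n) :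
    TypeB T n i ↔ List.Lex (· < ·) (suff T n i) (suff T n (i + 1)) := by
  induction h : n - i using Nat.strong_induction_on generalizing i with
  | _ d ih =>
  rcases lt_trichotomy (T i) (T (i + 1)) with hlt | heq | hgt
  · rw [suff_eq_cons (by omega), suff_eq_cons hi]
    exact iff_of_true ⟨i, le_rfl, hi, hlt, fun m him hmi => by omega⟩ (.rel hlt)
  · rw [lex_suff_iff_lex_suff_succ_of_eq hi heq, typeB_iff_typeB_succ_of_eq heq]
    rcases (show i + 2 < n ∨ i + 2 = n by omega) with hi' | hi'
    · exact ih (n - (i + 1)) (by omega) hi' rfl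
    · have hA : TypeA T n (i + 1) := Or.inr fun m him hmn => by omega
      rw [hi', suff_eq_nil le_rfl]
      exact iff_of_false (typeA_iff_not_typeB.mp hA) List.not_lex_nil
  · have hA : TypeA T n i := Or.inl ⟨i, le_rfl, hi, hgt, fun m him hmi => by omega⟩
    rw [suff_eq_cons (by omega), suff_eq_cons hi]
    exact iff_of_false (typeA_iff_not_typeB.mp hA) (asymm (List.Lex.rel hgt))

end

theorem stmt_3_general {α : Type*} [LinearOrder α] (T : ℕ → α) (n : ℕ)
    (i : ℕ) (hi : i < n - 1) :
    (TypeA T n i ↔ List.Lex (· < ·) (suff T n (i + 1)) (suff T n i)) ∧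
    (TypeB T n i ↔ List.Lex (· < ·) (suff T n i) (suff T n (i + 1))) := by
  have hB := typeB_iff_lex_suff (T := T) (by omega : i + 1 < n)
  have hne : suff T n (i + 1) ≠ suff T n i := fun h =>
    absurd (congrArg List.length h) (by simp only [length_suff]; omega)
  refine ⟨?_, hB⟩
  rw [typeA_iff_not_typeB, hB, lex_iff_not_lex_swap hne]

/-- For `0 ≤ i < n - 1`: `S_i` has type A iff `S_{i+1} < S_i`, and
`S_i` has type B iff `S_i < S_{i+1}` (lexicographically). -/
theorem stmt_3 {α : Type*} [LinearOrder α] (T : ℕ → α) (n : ℕ) (hn : 1 ≤ n)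
    (i : ℕ) (hi : i < n - 1) :
    (TypeA T n i ↔ List.Lex (· < ·) (suff T n (i + 1)) (suff T n i)) ∧
    (TypeB T n i ↔ List.Lex (· < ·) (suff T n i) (suff T n (i + 1))) :=
  stmt_3_general T n i hi
end

section
/- The number of positions i with 0 ≤ i < n such that S_i is a B*-suffix is at most ⌊n/2⌋. -/
lemma typeB_not_typeA {α : Type*} [LinearOrder α] {T : ℕ → α} {n i : ℕ}
    (hB : TypeB T n i) (hA : TypeA T n i) : False := by
  obtain ⟨k, hik, hkn, hlt, heq⟩ := hB
  rcases hA with ⟨k', hik', hkn', hlt', heq'⟩ | hall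
  · rcases lt_trichotomy k k' with h | h | h
    · exact absurd (heq' k hik h) (ne_of_lt hlt)
    · subst h; exact absurd hlt (not_lt_of_gt hlt')
    · exact absurd (heq k' hik' h) (ne_of_gt hlt')
  · exact absurd (hall k hik hkn) (ne_of_lt hlt)

/-- The number of B*-suffixes is at most `⌊n / 2⌋`. -/
theorem stmt_4 {α : Type*} [LinearOrder α] (T : ℕ → α) (n : ℕ) (hn : 1 ≤ n) :
    {i : ℕ | i < n ∧ TypeBStar T n i}.ncard ≤ n / 2 := by
  set S : Set ℕ := {i : ℕ | i < n ∧ TypeBStar T n i} with hS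
  -- no two consecutive elements
  have hnotadj : ∀ i ∈ S, i + 1 ∉ S := by
    rintro i ⟨-, -, hA⟩ ⟨-, hB, -⟩
    exact typeB_not_typeA hB hA
  -- elements satisfy i + 2 ≤ n
  have hbound : ∀ i ∈ S, i + 2 ≤ n := by
    rintro i ⟨-, ⟨k, hik, hkn, -, -⟩, -⟩
    omega
  have key : ∀ i ∈ S, ∀ j ∈ S, i < j → i / 2 < j / 2 := by
    intro i hi j hj h
    have : j ≠ i + 1 := fun he => hnotadj i hi (he ▸ hj)
    have h2 : i + 2 ≤ j := by omega
    have : (i + 2) / 2 ≤ j / 2 := Nat.div_le_div_right h2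
    omega
  have hinj : Set.InjOn (fun i => i / 2) S := by
    intro i hi j hj hij
    rcases lt_trichotomy i j with h | h | h
    · exact absurd hij (ne_of_lt (key i hi j hj h))
    · exact h
    · exact absurd hij (ne_of_gt (key j hj i hi h))
  have himg : (fun i => i / 2) '' S ⊆ Set.Iio (n / 2) := by
    rintro x ⟨i, hi, rfl⟩
    have := hbound i hi
    simp only [Set.mem_Iio]
    calc i / 2 < (i + 2) / 2 := by omega
      _ ≤ n / 2 := Nat.div_le_div_right this
  calc S.ncard = ((fun i => i / 2) '' S).ncard := (Set.ncard_image_of_injOn hinj).symm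
    _ ≤ (Set.Iio (n / 2)).ncard := Set.ncard_le_ncard himg (Set.finite_Iio _)
    _ = n / 2 := by rw [← Finset.coe_range, Set.ncard_coe_finset, Finset.card_range]
end

section
/- If S_j has type B (0 ≤ j < n), then there exists a position k with j ≤ k ≤ n−2 such that S_k is a B*-suffix and S_m has type B for every m with j ≤ m ≤ k. -/
/-- If `S_j` has type B, then there is a `k` with `j ≤ k ≤ n - 2` such that
`S_k` is a B*-suffix and all suffixes `S_m` with `j ≤ m ≤ k` have type B. -/
theorem stmt_5 {α : Type*} [LinearOrder α] (T : ℕ → α) (n : ℕ) (hn : 1 ≤ n)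
    (j : ℕ) (hj : j < n) (hB : TypeB T n j) :
    ∃ k, j ≤ k ∧ k ≤ n - 2 ∧ TypeBStar T n k ∧
      ∀ m, j ≤ m → m ≤ k → TypeB T n m := by
  classical
  -- not TypeB at n
  have hnotB_n : ∀ i, n ≤ i → ¬ TypeB T n i := by
    rintro i hi ⟨k, hik, hk, _, _⟩; omega
  -- TypeB implies i ≤ n - 2
  have hBle : ∀ i, TypeB T n i → i ≤ n - 2 := by
    rintro i ⟨k, hik, hk, _, _⟩; omega
  -- ¬TypeB → TypeA
  have hnotB_A : ∀ i, ¬ TypeB T n i → TypeA T n i := by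
    intro i hnB
    by_cases hne : ∃ k, i ≤ k ∧ k + 1 < n ∧ T k ≠ T (k + 1)
    · left
      obtain ⟨k, hk⟩ := Nat.find_spec hne
      set k0 := Nat.find hne with hk0
      have hspec := Nat.find_spec hne
      have heq : ∀ m, i ≤ m → m < k0 → T m = T (m + 1) := by
        intro m him hm
        by_contra hne'
        exact Nat.find_min hne hm ⟨him, by omega, hne'⟩
      rcases lt_or_gt_of_ne hspec.2.2 with h | h
      · exact absurd ⟨k0, hspec.1, hspec.2.1, h, heq⟩ hnB
      · exact ⟨k0, hspec.1, hspec.2.1, h, heq⟩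
    · right
      intro m him hm
      by_contra hne'
      exact hne ⟨m, him, hm, hne'⟩
  -- find least t with ¬ TypeB T n (j + t)
  have hex : ∃ t, ¬ TypeB T n (j + t) := ⟨n - j, hnotB_n _ (by omega)⟩
  set t0 := Nat.find hex with ht0
  have ht0spec : ¬ TypeB T n (j + t0) := Nat.find_spec hex
  have ht0pos : 1 ≤ t0 := by
    rcases Nat.eq_zero_or_pos t0 with h | h
    · exfalso; apply ht0spec; rw [h]; simpa using hB
    · exact h
  have hBall : ∀ t, t < t0 → TypeB T n (j + t) := by
    intro t ht
    by_contra hnB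
    exact Nat.find_min hex ht hnB
  refine ⟨j + (t0 - 1), by omega, ?_, ⟨hBall _ (by omega), ?_⟩, ?_⟩
  · exact hBle _ (hBall _ (by omega))
  · have : j + (t0 - 1) + 1 = j + t0 := by omega
    rw [this]
    exact hnotB_A _ ht0spec
  · intro m hjm hmk
    have : m = j + (m - j) := by omega
    rw [this]
    exact hBall _ (by omega)
end

section
/- Let A be a function from integers to a linear order and let i ≤ j be integers. Let K = { k : i ≤ k ≤ j and A[k] < A[k'] for every k' with i ≤ k' < k }. Then K is nonempty, and A[max K] = min{ A[k] : i ≤ k ≤ j }. (This is the correctness of answering range-minimum queries with a min-stack built by a right-to-left scan.) -/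
/-- Correctness of answering range-minimum queries with a min-stack built by a
right-to-left scan: the set `K` of positions in `[i, j]` whose value is
strictly smaller than all values at earlier positions of `[i, j]` is nonempty,
and the value at the largest element of `K` is the minimum of `A` on `[i, j]`. -/
theorem stmt_12 {β : Type*} [LinearOrder β] (A : ℤ → β) (i j : ℤ) (hij : i ≤ j) :
    {k : ℤ | i ≤ k ∧ k ≤ j ∧ ∀ k', i ≤ k' → k' < k → A k < A k'}.Nonempty ∧
    IsLeast (A '' {k : ℤ | i ≤ k ∧ k ≤ j})
      (A (sSup {k : ℤ | i ≤ k ∧ k ≤ j ∧ ∀ k', i ≤ k' → k' < k → A k < A k'})) := by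
  set K := {k : ℤ | i ≤ k ∧ k ≤ j ∧ ∀ k', i ≤ k' → k' < k → A k < A k'} with hK
  set T : Finset ℤ := Finset.Icc i j with hT
  have hTne : T.Nonempty := Finset.nonempty_Icc.mpr hij
  obtain ⟨k₀, hk₀T, hk₀min⟩ := T.exists_min_image A hTne
  set S : Finset ℤ := T.filter (fun k => A k ≤ A k₀) with hS
  have hSne : S.Nonempty := ⟨k₀, Finset.mem_filter.mpr ⟨hk₀T, le_refl _⟩⟩
  set m : ℤ := S.min' hSne with hm
  have hmS : m ∈ S := S.min'_mem hSne
  have hmT : m ∈ T := (Finset.mem_filter.mp hmS).1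
  have hmle : A m ≤ A k₀ := (Finset.mem_filter.mp hmS).2
  have hmI : i ≤ m ∧ m ≤ j := Finset.mem_Icc.mp hmT
  have hmmin : ∀ k ∈ T, A m ≤ A k := fun k hk => hmle.trans (hk₀min k hk)
  have hmK : m ∈ K := by
    refine ⟨hmI.1, hmI.2, fun k' hk'i hk'm => ?_⟩
    by_contra h
    push_neg at h
    have hk'T : k' ∈ T := Finset.mem_Icc.mpr ⟨hk'i, le_of_lt (lt_of_lt_of_le hk'm hmI.2)⟩
    have hk'S : k' ∈ S := Finset.mem_filter.mpr ⟨hk'T, h.trans hmle⟩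
    exact absurd (S.min'_le k' hk'S) (not_le.mpr hk'm)
  have hub : ∀ k ∈ K, k ≤ m := by
    intro k hk
    by_contra h
    push_neg at h
    have hkT : k ∈ T := Finset.mem_Icc.mpr ⟨hk.1, hk.2.1⟩
    exact absurd (hk.2.2 m hmI.1 h) (not_lt.mpr (hmmin k hkT))
  have hsup : sSup K = m := IsGreatest.csSup_eq ⟨hmK, hub⟩
  refine ⟨⟨m, hmK⟩, ?_⟩
  rw [hsup]
  constructor
  · exact ⟨m, ⟨hmI.1, hmI.2⟩, rfl⟩
  · rintro y ⟨k, ⟨hki, hkj⟩, rfl⟩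
    exact hmmin k (Finset.mem_Icc.mpr ⟨hki, hkj⟩)
end

section
/- Let 0 ≤ i, j ≤ n−2 with S_i a B*-suffix, S_j of type B but not a B*-suffix, T[i] = T[j], and T[i+1] = T[j+1]; write c = T[i+1]. Let a ≥ 1 be the length of the maximal run of the character c starting at position i+1 (i.e., the largest a with i+a ≤ n−1 and T[i+1] = T[i+2] = … = T[i+a] = c), and let b ≥ 1 be defined analogously at position j+1. Then lcp(i,j) = 1 + min(a,b), i.e., the longest common prefix ends at the first appearance of a character not equal to c in either suffix. -/
/-- If `S_i` is a B*-suffix, `S_j` has type B but is not a B*-suffix,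
`T[i] = T[j]`, `T[i+1] = T[j+1] = c`, and `a` (resp. `b`) is the length of
the maximal run of `c` starting at position `i+1` (resp. `j+1`), then
`lcp(i, j) = 1 + min a b`. -/
theorem stmt_14 {α : Type*} [LinearOrder α] (T : ℕ → α) (n : ℕ) (hn : 1 ≤ n)
    (i j : ℕ) (hi : i ≤ n - 2) (hj : j ≤ n - 2)
    (hBs : TypeBStar T n i) (hB : TypeB T n j) (hnBs : ¬ TypeBStar T n j)
    (hT0 : T i = T j) (hT1 : T (i + 1) = T (j + 1))
    (c : α) (hc : c = T (i + 1))
    (a b : ℕ) (ha1 : 1 ≤ a) (ha2 : i + a ≤ n - 1)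
    (ha3 : ∀ t, 1 ≤ t → t ≤ a → T (i + t) = c)
    (ha4 : i + a + 1 ≤ n - 1 → T (i + a + 1) ≠ c)
    (hb1 : 1 ≤ b) (hb2 : j + b ≤ n - 1)
    (hb3 : ∀ t, 1 ≤ t → t ≤ b → T (j + t) = c)
    (hb4 : j + b + 1 ≤ n - 1 → T (j + b + 1) ≠ c) :
    lcp T n i j = 1 + min a b := by
  have hn2 : 2 ≤ n := by omega
  -- characters in the runs
  have hac : ∀ mm, i + 1 ≤ mm → mm ≤ i + a → T mm = c := by
    intro mm h1 h2
    have := ha3 (mm - i) (by omega) (by omega)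
    rwa [show i + (mm - i) = mm by omega] at this
  have hbc : ∀ mm, j + 1 ≤ mm → mm ≤ j + b → T mm = c := by
    intro mm h1 h2
    have := hb3 (mm - j) (by omega) (by omega)
    rwa [show j + (mm - j) = mm by omega] at this
  have hnA : ¬ TypeA T n (j + 1) := fun h => hnBs ⟨hB, h⟩
  -- the run at j ends strictly inside the text
  have hjb1 : j + b + 1 ≤ n - 1 := by
    by_contra h
    have hend : j + b + 1 = n := by omega
    exact hnA (Or.inr (fun mm h1 h2 => by
      rw [hbc mm h1 (by omega), hbc (mm + 1) (by omega) (by omega)]))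
  -- the character after the run at j is strictly larger than c
  have hjbc : c < T (j + b + 1) := by
    have hne := hb4 hjb1
    rcases lt_trichotomy c (T (j + b + 1)) with h | h | h
    · exact h
    · exact absurd h.symm hne
    · exact absurd (Or.inl ⟨j + b, by omega, by omega, by
        rwa [hbc (j + b) (by omega) (by omega)], fun mm h1 h2 => by
        rw [hbc mm h1 (by omega), hbc (mm + 1) (by omega) (by omega)]⟩) hnA
  -- the character after the run at i is strictly smaller than c
  have hiac : i + a + 1 ≤ n - 1 → T (i + a + 1) < c := by
    intro h
    have hne := ha4 h
    rcases hBs.2 with ⟨k, hk1, hk2, hk3, hk4⟩ | hall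
    · rcases lt_trichotomy k (i + a) with hlt | heq | hgt
      · exact absurd (by rw [hac k (by omega) (by omega),
          hac (k + 1) (by omega) (by omega)]) hk3.ne'
      · subst heq
        rwa [hac (i + a) (by omega) (by omega)] at hk3
      · exact absurd ((hk4 (i + a) (by omega) hgt).symm.trans
          (hac (i + a) (by omega) (by omega))) hne
    · exact absurd ((hall (i + a) (by omega) (by omega)).symm.trans
        (hac (i + a) (by omega) (by omega))) hne
  -- membership
  have hmem : i + (1 + min a b) ≤ n ∧ j + (1 + min a b) ≤ n ∧
      ∀ t, t < 1 + min a b → T (i + t) = T (j + t) := by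
    refine ⟨by omega, by omega, fun t ht => ?_⟩
    rcases Nat.eq_zero_or_pos t with h0 | h1
    · simpa [h0] using hT0
    · rw [ha3 t h1 (by omega), hb3 t h1 (by omega)]
  -- upper bound
  have hub : ∀ s, (i + s ≤ n ∧ j + s ≤ n ∧ ∀ t, t < s → T (i + t) = T (j + t)) →
      s ≤ 1 + min a b := by
    intro s ⟨hs1, hs2, hs3⟩
    by_contra h
    rcases le_or_gt a b with hab | hab
    · have hmin : min a b = a := by omega
      have hia : i + a + 1 ≤ n - 1 := by omega
      have heq := hs3 (a + 1) (by omega)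
      rw [show i + (a + 1) = i + a + 1 by ring, show j + (a + 1) = j + a + 1 by ring] at heq
      have hlt := hiac hia
      rcases eq_or_lt_of_le hab with hab' | hab'
      · subst hab'
        exact absurd (heq ▸ hlt) (by simpa using hjbc.asymm)
      · have hTc : T (j + a + 1) = c := hb3 (a + 1) (by omega) (by omega)
        exact absurd (heq.trans hTc) hlt.ne
    · have hmin : min a b = b := by omega
      have heq := hs3 (b + 1) (by omega)
      have h1 : T (i + (b + 1)) = c := ha3 (b + 1) (by omega) (by omega)
      rw [h1, show j + (b + 1) = j + b + 1 by ring] at heq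
      exact absurd heq hjbc.ne
  -- compute the supremum
  unfold lcp
  apply le_antisymm
  · exact csSup_le ⟨1 + min a b, hmem⟩ fun s hs => hub s hs
  · exact le_csSup ⟨1 + min a b, fun s hs => hub s hs⟩ hmem
end
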